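/- arXiv:1006.5551 — 2 statements merged into one kernel-verified Lean document; each statement's English description precedes it below -/
import Mathlib

section
/- For every s > 0 there exists a constant C(s) ≥ 1 such that for every ball B in ℝⁿ admissible at scale s (i.e., r_B ≤ s·min(1, 1/|c_B|)) and every measurable subset E of B, one has C(s)⁻¹·γ(E) ≤ γ₀(c_B)·λ(E) ≤ C(s)·γ(E), where γ₀(x) = π^{-n/2} e^{-|x|²} is the Gaussian density, γ is the Gaussian measure, and λ is Lebesgue measure. -/
open MeasureTheory
open scoped ENNReal

/-- Gaussian density `γ₀(x) = π^{-n/2} e^{-|x|²}` on ℝⁿ. -/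
noncomputable def gaussDensity (n : ℕ) (x : EuclideanSpace ℝ (Fin n)) : ℝ :=
  Real.pi ^ (-(n : ℝ) / 2) * Real.exp (-‖x‖ ^ 2)

/-- The Gauss measure `γ` on ℝⁿ. -/
noncomputable def gaussMeasure (n : ℕ) : Measure (EuclideanSpace ℝ (Fin n)) :=
  volume.withDensity fun x => ENNReal.ofReal (gaussDensity n x)

/-- `mrad t = min(1, 1/t)`, equal to `1` when `t ≤ 1`. -/
noncomputable def mrad (t : ℝ) : ℝ := if t ≤ 1 then 1 else 1 / t

/-!
On an admissible ball `B(c, r)` with `r ≤ s · min(1, 1/|c|)`, the exponent `|x|²` of the Gaussian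
density moves by at most `r (2|c| + r) ≤ 2s + s²`, so the density stays within the factor
`exp(2s + s²)` of its value at the centre, and integrating this over `E` gives the claim.
-/

theorem withDensity_apply_comparable {α : Type*} [MeasurableSpace α] {μ : Measure α}
    {f : α → ℝ≥0∞} {s : Set α} (hs : MeasurableSet s) {c C : ℝ≥0∞} (hC₀ : C ≠ 0) (hC : C ≠ ∞)
    (h : ∀ x ∈ s, f x ≤ C * c ∧ c ≤ C * f x) :
    C⁻¹ * μ.withDensity f s ≤ c * μ s ∧ c * μ s ≤ C * μ.withDensity f s := by
  rw [ENNReal.inv_mul_le_iff hC₀ hC, withDensity_apply f hs, ← mul_assoc, ← setLIntegral_const,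
    ← lintegral_const_mul' C _ hC, ← setLIntegral_const]
  exact ⟨setLIntegral_mono' hs fun x hx => (h x hx).1, setLIntegral_mono' hs fun x hx => (h x hx).2⟩

theorem abs_norm_sq_sub_norm_sq_le {E : Type*} [SeminormedAddCommGroup E] (x y : E) :
    |‖x‖ ^ 2 - ‖y‖ ^ 2| ≤ ‖x - y‖ * (2 * ‖y‖ + ‖x - y‖) := by
  rw [sq_sub_sq, abs_mul, abs_of_nonneg (by positivity), mul_comm]
  exact mul_le_mul (abs_norm_sub_norm_le x y) (by linarith [norm_le_insert' x y]) (by positivity)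
    (norm_nonneg _)

theorem mrad_pos (t : ℝ) : 0 < mrad t := by
  unfold mrad
  split_ifs with h
  · exact one_pos
  · exact one_div_pos.2 (by linarith)

theorem mrad_le_one (t : ℝ) : mrad t ≤ 1 := by
  unfold mrad
  split_ifs with h
  · exact le_rfl
  · exact (div_le_one (by linarith)).2 (by linarith)

theorem mul_mrad_le_one (t : ℝ) : t * mrad t ≤ 1 := by
  unfold mrad
  split_ifs with h
  · simpa using h
  · rw [mul_one_div_cancel (by linarith)]

theorem abs_norm_sq_sub_norm_sq_le_of_mem_admissible_ball {E : Type*} [SeminormedAddCommGroup E]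
    {c x : E} {r s : ℝ} (hx : x ∈ Metric.closedBall c r) (hr : r ≤ s * mrad ‖c‖) :
    |‖x‖ ^ 2 - ‖c‖ ^ 2| ≤ 2 * s + s ^ 2 := by
  have hxc : ‖x - c‖ ≤ r := by rwa [← dist_eq_norm]
  have hr₀ : 0 ≤ r := (norm_nonneg _).trans hxc
  have hs₀ : 0 ≤ s := by nlinarith [mrad_pos ‖c‖]
  have hrs : r ≤ s := hr.trans (mul_le_of_le_one_right hs₀ (mrad_le_one _))
  have hrc : r * ‖c‖ ≤ s := by
    calc r * ‖c‖ ≤ s * (‖c‖ * mrad ‖c‖) := by nlinarith [norm_nonneg c]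
      _ ≤ s := mul_le_of_le_one_right hs₀ (mul_mrad_le_one ‖c‖)
  calc |‖x‖ ^ 2 - ‖c‖ ^ 2| ≤ ‖x - c‖ * (2 * ‖c‖ + ‖x - c‖) := abs_norm_sq_sub_norm_sq_le x c
    _ ≤ r * (2 * ‖c‖ + r) := by gcongr
    _ ≤ 2 * s + s ^ 2 := by nlinarith

theorem gaussDensity_le_exp_mul {n : ℕ} {x y : EuclideanSpace ℝ (Fin n)} {K : ℝ}
    (h : ‖y‖ ^ 2 - ‖x‖ ^ 2 ≤ K) : gaussDensity n x ≤ Real.exp K * gaussDensity n y := by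
  unfold gaussDensity
  rw [mul_left_comm, ← Real.exp_add]
  gcongr
  linarith

theorem ofReal_gaussDensity_le_ofReal_exp_mul {n : ℕ} {x y : EuclideanSpace ℝ (Fin n)} {K : ℝ}
    (h : ‖y‖ ^ 2 - ‖x‖ ^ 2 ≤ K) :
    ENNReal.ofReal (gaussDensity n x) ≤
      ENNReal.ofReal (Real.exp K) * ENNReal.ofReal (gaussDensity n y) := by
  rw [← ENNReal.ofReal_mul (Real.exp_pos K).le]
  exact ENNReal.ofReal_le_ofReal (gaussDensity_le_exp_mul h)

theorem stmt_3 (n : ℕ) (s : ℝ) (hs : 0 < s) :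
    ∃ C : ℝ≥0∞, 1 ≤ C ∧ C ≠ ⊤ ∧
      ∀ (cB : EuclideanSpace ℝ (Fin n)) (rB : ℝ), 0 < rB → rB ≤ s * mrad ‖cB‖ →
        ∀ E ⊆ Metric.closedBall cB rB, MeasurableSet E →
          C⁻¹ * gaussMeasure n E ≤ ENNReal.ofReal (gaussDensity n cB) * volume E ∧
          ENNReal.ofReal (gaussDensity n cB) * volume E ≤ C * gaussMeasure n E := by
  refine ⟨ENNReal.ofReal (Real.exp (2 * s + s ^ 2)), ?_, ENNReal.ofReal_ne_top, ?_⟩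
  · exact ENNReal.one_le_ofReal.2 (Real.one_le_exp (by positivity))
  intro cB rB _ hradm E hEB hE
  refine withDensity_apply_comparable hE (by simpa using Real.exp_pos _) ENNReal.ofReal_ne_top
    fun x hx => ?_
  have hvar := abs_le.1 (abs_norm_sq_sub_norm_sq_le_of_mem_admissible_ball (hEB hx) hradm)
  exact ⟨ofReal_gaussDensity_le_ofReal_exp_mul (by linarith),
    ofReal_gaussDensity_le_ofReal_exp_mul (by linarith)⟩
end

section
/- Let a be a Gaussian (1,r)-atom on ℝⁿ (1 < r < ∞) associated to an admissible ball B: supp a ⊆ B, ∫ a dγ = 0, ‖a‖_{L^r(γ)} ≤ γ(B)^{1/r−1}. Then a·γ₀ is C times a Lebesgue (1,r)-atom associated to B: ∫ a γ₀ dλ = 0 and ‖a γ₀‖_{L^r(λ)} ≤ C·λ(B)^{1/r−1}, where C depends only on n and r. -/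
open MeasureTheory
open scoped ENNReal

/-!
On an admissible ball `B = closedBall c ρ` we have `|‖x‖² - ‖c‖²| ≤ ρ (ρ + 2‖c‖) ≤ 3`, so the
Gaussian density is comparable to the constant `γ₀(c)` on `B`: `e⁻³ γ₀(c) ≤ γ₀ ≤ e³ γ₀(c)`.
Hence `|a γ₀|^r = |a|^r γ₀ · γ₀^(r-1) ≤ (e³ γ₀(c))^(r-1) |a|^r γ₀` and `γ(B) ≥ e⁻³ γ₀(c) λ(B)`.
Inserting these into the normalisation `‖a‖_{L^r(γ)} ≤ γ(B)^(1/r-1)`, the powers of `γ₀(c)` cancel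
and leave the constant `e^(6(1-1/r))`. The cancellation condition transfers because `dγ = γ₀ dλ`.
-/

open Metric Real

lemma gaussDensity_pos (n : ℕ) (x : EuclideanSpace ℝ (Fin n)) : 0 < gaussDensity n x := by
  unfold gaussDensity
  positivity

@[fun_prop]
lemma measurable_gaussDensity (n : ℕ) : Measurable (gaussDensity n) := by
  unfold gaussDensity
  fun_prop

lemma integrable_gaussDensity (n : ℕ) : Integrable (gaussDensity n) := by
  have h := (GaussianFourier.integrable_cexp_neg_mul_sq_norm_add (V := EuclideanSpace ℝ (Fin n))
    (b := 1) (by simp) 0 0).norm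
  refine (h.const_mul (π ^ (-(n : ℝ) / 2))).congr (ae_of_all _ fun x => ?_)
  simp [gaussDensity, Complex.norm_exp, ← Complex.ofReal_pow]

instance isFiniteMeasure_gaussMeasure (n : ℕ) : IsFiniteMeasure (gaussMeasure n) :=
  isFiniteMeasure_withDensity_ofReal (integrable_gaussDensity n).2

lemma integral_gaussMeasure (n : ℕ) (f : EuclideanSpace ℝ (Fin n) → ℝ) :
    ∫ x, f x ∂gaussMeasure n = ∫ x, f x * gaussDensity n x := by
  rw [gaussMeasure, integral_withDensity_eq_integral_toReal_smul (by fun_prop)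
    (ae_of_all _ fun _ => ENNReal.ofReal_lt_top)]
  congr with x
  rw [ENNReal.toReal_ofReal (gaussDensity_pos n x).le, smul_eq_mul, mul_comm]

lemma le_one_and_mul_le_one_of_le_mrad {s t : ℝ} (ht : 0 ≤ t) (h : s ≤ mrad t) :
    s ≤ 1 ∧ s * t ≤ 1 := by
  unfold mrad at h
  split_ifs at h with ht1
  · exact ⟨h, by nlinarith⟩
  · have ht0 : 0 < t := by linarith
    have hst : s * t ≤ 1 := by rwa [le_div_iff₀ ht0] at h
    exact ⟨by nlinarith, hst⟩

lemma abs_sq_norm_sub_sq_norm_le_three {E : Type*} [SeminormedAddCommGroup E] {x c : E} {ρ : ℝ}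
    (hx : x ∈ closedBall c ρ) (hρ : ρ ≤ mrad ‖c‖) : |‖x‖ ^ 2 - ‖c‖ ^ 2| ≤ 3 := by
  obtain ⟨hρ1, hρc⟩ := le_one_and_mul_le_one_of_le_mrad (norm_nonneg c) hρ
  have hd : |‖x‖ - ‖c‖| ≤ ρ := (abs_norm_sub_norm_le x c).trans (mem_closedBall_iff_norm.mp hx)
  have hfac : ‖x‖ ^ 2 - ‖c‖ ^ 2 = (‖x‖ - ‖c‖) * ((‖x‖ - ‖c‖) + 2 * ‖c‖) := by ring
  have hρ0 : 0 ≤ ρ := (abs_nonneg _).trans hd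
  rw [hfac, abs_mul]
  calc |‖x‖ - ‖c‖| * |‖x‖ - ‖c‖ + 2 * ‖c‖| ≤ ρ * (ρ + 2 * ‖c‖) := by
        gcongr
        exact (abs_add_le _ _).trans
          (by rw [abs_of_nonneg (by positivity : (0 : ℝ) ≤ 2 * ‖c‖)]; linarith)
    _ ≤ 3 := by nlinarith

lemma gaussDensity_eq_mul_exp (n : ℕ) (x c : EuclideanSpace ℝ (Fin n)) :
    gaussDensity n x = gaussDensity n c * exp (‖c‖ ^ 2 - ‖x‖ ^ 2) := by
  rw [gaussDensity, gaussDensity, mul_assoc, ← exp_add]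
  ring_nf

lemma gaussDensity_mem_Icc_of_mem_closedBall {n : ℕ} {x c : EuclideanSpace ℝ (Fin n)} {ρ : ℝ}
    (hx : x ∈ closedBall c ρ) (hρ : ρ ≤ mrad ‖c‖) :
    gaussDensity n x ∈ Set.Icc (exp (-3) * gaussDensity n c) (exp 3 * gaussDensity n c) := by
  obtain ⟨hlo, hhi⟩ := abs_le.mp (abs_sq_norm_sub_sq_norm_le_three hx hρ)
  have hc := gaussDensity_pos n c
  rw [gaussDensity_eq_mul_exp n x c, mul_comm _ (gaussDensity n c),
    mul_comm _ (gaussDensity n c)]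
  constructor <;> gcongr <;> linarith

lemma ofReal_mul_le_withDensity_ofReal_apply {α : Type*} [MeasurableSpace α] {μ : Measure α}
    {f : α → ℝ} {s : Set α} (hs : MeasurableSet s) {L : ℝ} (hL : ∀ x ∈ s, L ≤ f x) :
    ENNReal.ofReal L * μ s ≤ μ.withDensity (fun x => ENNReal.ofReal (f x)) s := by
  rw [withDensity_apply _ hs, ← setLIntegral_const]
  exact setLIntegral_mono' hs fun x hx => ENNReal.ofReal_le_ofReal (hL x hx)

lemma mul_volume_closedBall_le_gaussMeasure {n : ℕ} {c : EuclideanSpace ℝ (Fin n)} {ρ : ℝ}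
    (hρ : ρ ≤ mrad ‖c‖) :
    exp (-3) * gaussDensity n c * (volume (closedBall c ρ)).toReal ≤
      (gaussMeasure n (closedBall c ρ)).toReal := by
  have hL : 0 ≤ exp (-3) * gaussDensity n c := (mul_pos (exp_pos _) (gaussDensity_pos n c)).le
  rw [← ENNReal.toReal_ofReal hL, ← ENNReal.toReal_mul]
  exact ENNReal.toReal_mono (measure_ne_top _ _) (ofReal_mul_le_withDensity_ofReal_apply
    measurableSet_closedBall fun x hx => (gaussDensity_mem_Icc_of_mem_closedBall hx hρ).1)

lemma abs_mul_rpow_le {a g M r : ℝ} (hg : 0 < g) (hgM : g ≤ M) (hr : 1 ≤ r) :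
    |a * g| ^ r ≤ M ^ (r - 1) * (|a| ^ r * g) := by
  have hsplit : g ^ r = g ^ (r - 1) * g := by
    rw [rpow_sub_one hg.ne', div_mul_cancel₀ _ hg.ne']
  rw [abs_mul, abs_of_pos hg, mul_rpow (abs_nonneg a) hg.le, hsplit]
  have := rpow_le_rpow hg.le hgM (sub_nonneg.mpr hr)
  calc |a| ^ r * (g ^ (r - 1) * g) ≤ |a| ^ r * (M ^ (r - 1) * g) := by gcongr
    _ = M ^ (r - 1) * (|a| ^ r * g) := by ring

lemma abs_rpow_mul_le {a g L r : ℝ} (hL : 0 < L) (hLg : L ≤ g) (hr : 1 ≤ r) :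
    |a| ^ r * g ≤ L ^ (1 - r) * |a * g| ^ r := by
  have hg := hL.trans_le hLg
  have hsplit : g = g ^ r * g ^ (1 - r) := by
    rw [← rpow_add hg, add_sub_cancel, rpow_one]
  have := rpow_le_rpow_of_nonpos hL hLg (sub_nonpos.mpr hr)
  rw [abs_mul, abs_of_pos hg, mul_rpow (abs_nonneg a) hg.le]
  calc |a| ^ r * g = |a| ^ r * g ^ r * g ^ (1 - r) := by rw [mul_assoc, ← hsplit]
    _ ≤ |a| ^ r * g ^ r * L ^ (1 - r) := by gcongr
    _ = L ^ (1 - r) * (|a| ^ r * g ^ r) := by ring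

lemma integral_le_mul_integral_of_le {α : Type*} [MeasurableSpace α] {μ : Measure α}
    {f h : α → ℝ} {K : ℝ} (hK : 0 ≤ K) (hh : ∀ x, 0 ≤ h x) (hfh : ∀ x, f x ≤ K * h x)
    (hint : Integrable f μ → Integrable h μ) : ∫ x, f x ∂μ ≤ K * ∫ x, h x ∂μ := by
  by_cases hf : Integrable f μ
  · rw [← integral_const_mul]
    exact integral_mono hf ((hint hf).const_mul K) hfh
  · rw [integral_undef hf]
    exact mul_nonneg hK (integral_nonneg hh)

lemma integral_abs_mul_gaussDensity_rpow_le {n : ℕ} {c : EuclideanSpace ℝ (Fin n)} {ρ r : ℝ}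
    {a : EuclideanSpace ℝ (Fin n) → ℝ} (hρ : ρ ≤ mrad ‖c‖) (hr : 1 ≤ r) (ha : Measurable a)
    (hsupp : Function.support a ⊆ closedBall c ρ) :
    ∫ x, |a x * gaussDensity n x| ^ r ≤
      (exp 3 * gaussDensity n c) ^ (r - 1) * ∫ x, |a x| ^ r ∂gaussMeasure n := by
  have hzero : ∀ x ∉ closedBall c ρ, a x = 0 := fun x hx =>
    Function.notMem_support.mp fun h => hx (hsupp h)
  have hr0 : r ≠ 0 := by positivity
  have hc := gaussDensity_pos n c
  rw [integral_gaussMeasure]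
  refine integral_le_mul_integral_of_le (by positivity)
    (fun x => mul_nonneg (by positivity) (gaussDensity_pos n x).le) (fun x => ?_) fun hI => ?_
  · by_cases hx : x ∈ closedBall c ρ
    · exact abs_mul_rpow_le (gaussDensity_pos n x)
        (gaussDensity_mem_Icc_of_mem_closedBall hx hρ).2 hr
    · simp [hzero x hx, zero_rpow hr0]
  · refine (hI.const_mul ((exp (-3) * gaussDensity n c) ^ (1 - r))).mono' (by fun_prop)
      (ae_of_all _ fun x => ?_)
    rw [Real.norm_of_nonneg (mul_nonneg (by positivity) (gaussDensity_pos n x).le)]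
    by_cases hx : x ∈ closedBall c ρ
    · exact abs_rpow_mul_le (by positivity)
        (gaussDensity_mem_Icc_of_mem_closedBall hx hρ).1 hr
    · simp [hzero x hx, zero_rpow hr0]

lemma rpow_mul_mul_rpow_neg {M L V p : ℝ} (hM : 0 ≤ M) (hL : 0 < L) (hV : 0 ≤ V) :
    M ^ p * (L * V) ^ (-p) = (M / L) ^ p * V ^ (-p) := by
  rw [mul_rpow hL.le hV, rpow_neg hL.le, div_rpow hM hL.le]
  ring

theorem stmt_16 (n : ℕ) (r : ℝ) (hr1 : 1 < r) :
    ∃ C > 0, ∀ (cB : EuclideanSpace ℝ (Fin n)) (rad : ℝ)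
      (a : EuclideanSpace ℝ (Fin n) → ℝ),
      0 < rad → rad ≤ mrad ‖cB‖ →
      Measurable a →
      Function.support a ⊆ Metric.closedBall cB rad →
      Integrable a (gaussMeasure n) →
      (∫ x, a x ∂gaussMeasure n) = 0 →
      (∫ x, |a x| ^ r ∂gaussMeasure n) ^ (1 / r) ≤
        (gaussMeasure n (Metric.closedBall cB rad)).toReal ^ (1 / r - 1) →
      (∫ x, a x * gaussDensity n x) = 0 ∧
        (∫ x, |a x * gaussDensity n x| ^ r) ^ (1 / r) ≤
          C * (volume (Metric.closedBall cB rad)).toReal ^ (1 / r - 1) := by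
  have hr0 : 0 < r := by linarith
  refine ⟨exp 6 ^ (1 - 1 / r), by positivity, fun c ρ a hρ0 hρ ha hsupp _ hmean hnorm => ?_⟩
  refine ⟨by rwa [← integral_gaussMeasure], ?_⟩
  set m := gaussDensity n c
  set V := (volume (closedBall c ρ)).toReal
  have hm : 0 < m := gaussDensity_pos n c
  have hV : 0 < V := ENNReal.toReal_pos (measure_closedBall_pos volume c hρ0).ne'
    measure_closedBall_lt_top.ne
  have hexp : 1 / r - 1 = -(1 - 1 / r) := by ring
  have hI : 0 ≤ ∫ x, |a x| ^ r ∂gaussMeasure n := integral_nonneg fun x => by positivity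
  calc (∫ x, |a x * gaussDensity n x| ^ r) ^ (1 / r)
      ≤ ((exp 3 * m) ^ (r - 1) * ∫ x, |a x| ^ r ∂gaussMeasure n) ^ (1 / r) := by
        gcongr
        exact integral_abs_mul_gaussDensity_rpow_le hρ hr1.le ha hsupp
    _ = (exp 3 * m) ^ (1 - 1 / r) * (∫ x, |a x| ^ r ∂gaussMeasure n) ^ (1 / r) := by
        rw [mul_rpow (by positivity) hI, ← rpow_mul (by positivity)]
        congr 2
        field_simp
    _ ≤ (exp 3 * m) ^ (1 - 1 / r) * (exp (-3) * m * V) ^ (1 / r - 1) := by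
        gcongr
        exact hnorm.trans (rpow_le_rpow_of_nonpos (by positivity)
          (mul_volume_closedBall_le_gaussMeasure hρ)
          (by rw [sub_nonpos, div_le_one hr0]; exact hr1.le))
    _ = exp 6 ^ (1 - 1 / r) * V ^ (1 / r - 1) := by
        rw [hexp, rpow_mul_mul_rpow_neg (by positivity) (by positivity) hV.le]
        congr 2
        rw [mul_div_mul_right _ _ hm.ne', ← exp_sub]
        norm_num
end
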